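/- arXiv:2208.01563 — 5 statements merged into one kernel-verified Lean document; each statement's English description precedes it below -/
import Mathlib

section
/- Let A be a finite set of agents, let P1 and P2 be two strict preference profiles on A in which every agent has the same acceptability set in P1 and in P2, let M1 be a perfect matching on A that is stable with respect to P1, and let M2 be a perfect matching on A that is stable with respect to P2. Then the number of pairs {b,c} ∈ M1 such that, with respect to the preferences in P2, agent b strictly prefers M2(b) to c and agent c strictly prefers M2(c) to b is at most the number of agents whose preference lists in P1 and P2 differ. -/
/-- A preference profile: each agent has a finite set of acceptable agents and a
rank function encoding its preference list (lower rank = more preferred). -/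
structure PrefProfile (A : Type*) where
  acc : A → Finset A
  rank : A → A → ℕ

namespace PrefProfile

variable {A : Type*} (P : PrefProfile A)

/-- Agent `a` strictly prefers `b` to `c`. -/
def Prefers (a b c : A) : Prop := P.rank a b < P.rank a c

/-- A lawful SR(-T) profile: no agent accepts itself and acceptability is symmetric. -/
def Lawful : Prop := (∀ a, a ∉ P.acc a) ∧ (∀ a b : A, b ∈ P.acc a → a ∈ P.acc b)

/-- Strict preferences: no ties among acceptable agents. -/
def Strict : Prop := ∀ a : A, ∀ b ∈ P.acc a, ∀ c ∈ P.acc a, P.rank a b = P.rank a c → b = c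

end PrefProfile

/-- A finite set of unordered pairs of agents is a matching if its pairs are
non-diagonal and pairwise disjoint. -/
def IsMatching {A : Type*} (M : Finset (Sym2 A)) : Prop :=
  (∀ p ∈ M, ¬ p.IsDiag) ∧ ∀ a b c : A, s(a, b) ∈ M → s(a, c) ∈ M → b = c

/-- `a` is matched in `M`. -/
def Matched {A : Type*} (M : Finset (Sym2 A)) (a : A) : Prop := ∃ b, s(a, b) ∈ M

/-- A matching is perfect if it matches all agents. -/
def IsPerfect {A : Type*} (M : Finset (Sym2 A)) : Prop := ∀ a, Matched M a

/-- All pairs of `M` consist of mutually acceptable agents w.r.t. `P`. -/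
def Acceptable {A : Type*} (P : PrefProfile A) (M : Finset (Sym2 A)) : Prop :=
  ∀ a b : A, s(a, b) ∈ M → b ∈ P.acc a

/-- The pair `{a, b}` blocks `M` w.r.t. `P`: `a` and `b` accept each other, and each
of them is either unmatched or strictly prefers the other to its partner. -/
def Blocks {A : Type*} (P : PrefProfile A) (M : Finset (Sym2 A)) (a b : A) : Prop :=
  b ∈ P.acc a ∧ a ∈ P.acc b ∧
    (∀ c, s(a, c) ∈ M → P.Prefers a b c) ∧ (∀ c, s(b, c) ∈ M → P.Prefers b a c)

/-- `M` is a (weakly) stable matching for `P`. -/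
def IsStable {A : Type*} (P : PrefProfile A) (M : Finset (Sym2 A)) : Prop :=
  IsMatching M ∧ Acceptable P M ∧ ∀ a b : A, ¬ Blocks P M a b

/-- `a` has the same preference list in `P1` and `P2`: same acceptability set and the
same strict comparisons among acceptable agents. -/
def SamePrefList {A : Type*} (P1 P2 : PrefProfile A) (a : A) : Prop :=
  P1.acc a = P2.acc a ∧
    ∀ b ∈ P1.acc a, ∀ c ∈ P1.acc a, (P1.Prefers a b c ↔ P2.Prefers a b c)

/-! Write `m₁`, `m₂` for the partner maps and call `a` *forward* if it `P2`-prefers `m₂ a` to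
`m₁ a`; both ends of a counted pair are forward. Stability moves forwardness along the
alternating walk `a, m₂ a, m₁ m₂ a, …` while preference lists agree: if `a` is forward and
unchanged, stability of `M1` makes `m₂ a` `P1`-prefer `m₁ m₂ a` to `a`, and if `m₂ a` is
unchanged too, stability of `M2` makes `m₁ m₂ a` forward. The walk from an end `b` of a counted
pair cannot return to `b`, as it would reach `m₁ b` with the opposite preference, so it meets a
changed agent; each changed agent is met first by at most two such walks, one per parity of its
position. Both ends of every counted pair start a walk, so twice the number of pairs is at most
twice the number of changed agents. -/

namespace IsPerfect

variable {A : Type*} {M : Finset (Sym2 A)}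

noncomputable def partner (hp : IsPerfect M) (a : A) : A := (hp a).choose

variable (hp : IsPerfect M)

theorem mk_partner_mem (a : A) : s(a, hp.partner a) ∈ M := (hp a).choose_spec

theorem eq_partner_of_mem (hM : IsMatching M) {a b : A} (h : s(a, b) ∈ M) :
    b = hp.partner a :=
  hM.2 a b _ h (hp.mk_partner_mem a)

theorem partner_involutive (hM : IsMatching M) : Function.Involutive hp.partner := fun a =>
  (hp.eq_partner_of_mem hM (Sym2.eq_swap ▸ hp.mk_partner_mem a)).symm

theorem partner_ne (hM : IsMatching M) (a : A) : hp.partner a ≠ a := fun h =>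
  hM.1 _ (hp.mk_partner_mem a) (Sym2.mk_isDiag_iff.mpr h.symm)

theorem two_mul_ncard_pairs_le [Finite A] (hM : IsMatching M) (R : A → A → Prop) :
    2 * {p | p ∈ M ∧ ∀ b c, p = s(b, c) → R b c ∧ R c b}.ncard ≤
      {a | R a (hp.partner a) ∧ R (hp.partner a) a}.ncard := by
  classical
  have := Fintype.ofFinite A
  set E := Finset.univ.filter fun a => R a (hp.partner a) ∧ R (hp.partner a) a
  have hsub : {p | p ∈ M ∧ ∀ b c, p = s(b, c) → R b c ∧ R c b} ⊆
      E.image fun a => s(a, hp.partner a) := by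
    rintro p ⟨hpM, hR⟩
    induction p using Sym2.ind with | _ a b =>
    obtain rfl := hp.eq_partner_of_mem hM hpM
    exact Finset.mem_image.mpr ⟨a, by simpa [E] using hR a _ rfl, rfl⟩
  have hfibre : ∀ q ∈ E.image fun a => s(a, hp.partner a),
      2 ≤ (E.filter fun a => s(a, hp.partner a) = q).card := by
    simp only [Finset.mem_image]
    rintro _ ⟨a, ha, rfl⟩
    rw [← Finset.card_pair (hp.partner_ne hM a).symm]
    refine Finset.card_le_card fun b hb => ?_
    simp only [E, Finset.mem_insert, Finset.mem_singleton, Finset.mem_filter, Finset.mem_univ,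
      true_and] at ha hb ⊢
    rcases hb with rfl | rfl
    · exact ⟨ha, rfl⟩
    · rw [hp.partner_involutive hM a]
      exact ⟨ha.symm, Sym2.eq_swap⟩
  calc 2 * {p | p ∈ M ∧ ∀ b c, p = s(b, c) → R b c ∧ R c b}.ncard
      ≤ 2 * (E.image fun a => s(a, hp.partner a)).card := by
        grw [Set.ncard_le_ncard hsub, Set.ncard_coe_finset]
    _ ≤ E.card := Finset.mul_card_image_le_card E 2 hfibre
    _ = _ := by rw [← Set.ncard_coe_finset]; simp [E]

end IsPerfect

section Preferences

variable {A : Type*}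

theorem PrefProfile.Strict.prefers_of_not_prefers {P : PrefProfile A} (hs : P.Strict) {a b c : A}
    (hb : b ∈ P.acc a) (hc : c ∈ P.acc a) (hbc : b ≠ c) (h : ¬ P.Prefers a c b) :
    P.Prefers a b c :=
  (not_lt.mp h).lt_of_ne fun h' => hbc (hs a b hb c hc h')

theorem SamePrefList.symm {P Q : PrefProfile A} {a : A} (h : SamePrefList P Q a) :
    SamePrefList Q P a :=
  ⟨h.1.symm, fun b hb c hc => (h.2 b (h.1 ▸ hb) c (h.1 ▸ hc)).symm⟩

theorem SamePrefList.prefers_iff {P Q : PrefProfile A} {a b c : A} (h : SamePrefList P Q a)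
    (hb : b ∈ P.acc a) (hc : c ∈ P.acc a) : P.Prefers a b c ↔ Q.Prefers a b c :=
  h.2 b hb c hc

theorem IsStable.prefers_mate_of_prefers {P : PrefProfile A} {M : Finset (Sym2 A)}
    (hs : P.Strict) (hM : IsStable P M) {v w u w' : A} (hvw : s(v, w) ∈ M) (huw' : s(u, w') ∈ M)
    (hu : u ∈ P.acc v) (hv : v ∈ P.acc u) (h : P.Prefers v u w) : P.Prefers u w' v := by
  obtain ⟨⟨-, hmate⟩, hacc, hstab⟩ := hM
  have hw'v : w' ≠ v := by
    intro hw'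
    rw [hw', Sym2.eq_swap] at huw'
    rw [hmate v u w huw' hvw] at h
    exact lt_irrefl _ h
  refine hs.prefers_of_not_prefers (hacc u w' huw') hv hw'v fun h' => hstab v u ?_
  refine ⟨hu, hv, fun c hc => ?_, fun c hc => ?_⟩
  · rwa [hmate v c w hc hvw]
  · rwa [hmate u c w' hc huw']

theorem IsStable.prefers_mate_of_samePrefList {P Q : PrefProfile A} {M M' : Finset (Sym2 A)}
    (hs : P.Strict) (hM : IsStable P M) (hM' : Acceptable P M') {v u w w' : A}
    (hv : SamePrefList Q P v) (hvu : s(v, u) ∈ M') (hvw : s(v, w) ∈ M) (huw' : s(u, w') ∈ M)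
    (h : Q.Prefers v u w) : P.Prefers u w' v := by
  have hu : u ∈ P.acc v := hM' v u hvu
  refine hM.prefers_mate_of_prefers hs hvw huw' hu (hM' u v (Sym2.eq_swap ▸ hvu)) ?_
  exact (hv.prefers_iff (hv.1 ▸ hu) (hv.1 ▸ hM.2.1 v w hvw)).mp h

end Preferences

namespace Equiv.Perm

variable {S : Type*} (σ : Perm S) {G U : S → Prop}

theorem pow_apply_of_forall_lt (hG : ∀ s, U s → G s → G (σ s)) {s : S} (hs : G s) :
    ∀ n, (∀ i < n, U ((σ ^ i) s)) → G ((σ ^ n) s)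
  | 0, _ => hs
  | n + 1, hU => by
    rw [pow_succ', mul_apply]
    exact hG _ (hU n n.lt_succ_self)
      (pow_apply_of_forall_lt hG hs n fun i hi => hU i (hi.trans n.lt_succ_self))

/-- Sending `s` to the first point of its forward orbit outside `U` is injective on the left-hand
set. -/
theorem ncard_entries_le [Finite S] (hG : ∀ s, U s → G s → G (σ s)) :
    {s | G s ∧ ¬ (U (σ⁻¹ s) ∧ G (σ⁻¹ s))}.ncard ≤ {s | ¬ U s}.ncard := by
  classical
  set E := {s | G s ∧ ¬ (U (σ⁻¹ s) ∧ G (σ⁻¹ s))}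
  have hexit : ∀ s ∈ E, ∃ n, ¬ U ((σ ^ n) s) ∧ ∀ i < n, U ((σ ^ i) s) := by
    rintro s ⟨hs, hentry⟩
    have hex : ∃ n, ¬ U ((σ ^ n) s) := by
      by_contra! hU
      obtain ⟨k, hk⟩ := Nat.exists_eq_add_one_of_ne_zero (orderOf_pos σ).ne'
      have hback : (σ ^ k) s = σ⁻¹ s := by
        rw [eq_inv_iff_eq, ← mul_apply, ← pow_succ', ← hk, pow_orderOf_eq_one, one_apply]
      exact hentry (hback ▸ ⟨hU k, σ.pow_apply_of_forall_lt hG hs k fun i _ => hU i⟩)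
    exact ⟨Nat.find hex, Nat.find_spec hex, fun i hi => not_not.mp (Nat.find_min hex hi)⟩
  choose! n hn_exit hn_min using hexit
  refine Set.ncard_le_ncard_of_injOn (fun s => (σ ^ n s) s) (fun s hs => hn_exit s hs) ?_
  suffices h : ∀ s ∈ E, ∀ t ∈ E, n s ≤ n t → (σ ^ n s) s = (σ ^ n t) t → s = t by
    intro s hs t ht hst
    rcases le_total (n s) (n t) with hle | hle
    exacts [h s hs t ht hle hst, (h t ht s hs hle hst.symm).symm]
  rintro s ⟨-, hentry⟩ t ht hle hst
  obtain ⟨d, hd⟩ := Nat.exists_eq_add_of_le hle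
  have hsd : s = (σ ^ d) t := by
    rw [hd, pow_add, mul_apply] at hst
    exact (σ ^ n s).injective hst
  rcases d with _ | j
  · simpa using hsd
  have hj : σ⁻¹ s = (σ ^ j) t := by rw [hsd, pow_succ', mul_apply, inv_eq_iff_eq]
  have hU : ∀ i ≤ j, U ((σ ^ i) t) := fun i hi => hn_min t ht i (by omega)
  exact (hentry (hj ▸ ⟨hU j le_rfl,
    σ.pow_apply_of_forall_lt hG ht.1 j fun i hi => hU i hi.le⟩)).elim

end Equiv.Perm

theorem Set.ncard_setOf_not_and_comp_le {A : Type*} [Finite A] {f : A → A}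
    (hf : Function.Bijective f) (p : A → Prop) :
    {a | ¬ (p a ∧ p (f a))}.ncard ≤ 2 * {a | ¬ p a}.ncard := by
  calc {a | ¬ (p a ∧ p (f a))}.ncard ≤ ({a | ¬ p a} ∪ f ⁻¹' {a | ¬ p a}).ncard :=
        Set.ncard_le_ncard fun a ha => not_and_or.mp ha
    _ ≤ {a | ¬ p a}.ncard + (f ⁻¹' {a | ¬ p a}).ncard := Set.ncard_union_le _ _
    _ = 2 * {a | ¬ p a}.ncard := by
        rw [Set.ncard_preimage_of_injective_subset_range hf.1 (by simp [hf.2.range_eq]), two_mul]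

/-- The counting core of the theorem, with `S` for "unchanged" and `X` for "forward". -/
theorem ncard_setOf_and_le_of_alternating {A : Type*} [Finite A] {m1 m2 : A → A}
    (h1 : Function.Involutive m1) (h2 : Function.Involutive m2) {X Y S : A → Prop}
    (hXY : ∀ a, S a → X a → Y (m2 a)) (hYX : ∀ a, S a → Y a → X (m1 a))
    (hexcl : ∀ a, S a → X a → ¬ Y a) :
    {a | X a ∧ X (m1 a)}.ncard ≤ 2 * {a | ¬ S a}.ncard := by
  let σ : Equiv.Perm A := h2.toPerm.trans h1.toPerm
  have hσ : ∀ b, σ⁻¹ b = m2 (m1 b) := fun b => by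
    rw [Equiv.Perm.inv_eq_iff_eq]
    show b = m1 (m2 (m2 (m1 b)))
    rw [h2, h1]
  calc {a | X a ∧ X (m1 a)}.ncard
      ≤ {b | X b ∧ ¬ ((S (σ⁻¹ b) ∧ S (m2 (σ⁻¹ b))) ∧ X (σ⁻¹ b))}.ncard := by
        refine Set.ncard_le_ncard fun b ⟨hb, hmb⟩ => ⟨hb, ?_⟩
        rintro ⟨⟨ha, hma⟩, hXa⟩
        rw [hσ] at ha hma hXa
        rw [h2] at hma
        exact hexcl _ hma hmb (h2 (m1 b) ▸ hXY _ ha hXa)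
    _ ≤ {a | ¬ (S a ∧ S (m2 a))}.ncard :=
        σ.ncard_entries_le (U := fun a => S a ∧ S (m2 a)) fun a ⟨ha, hma⟩ hX =>
          hYX _ hma (hXY a ha hX)
    _ ≤ 2 * {a | ¬ S a}.ncard := Set.ncard_setOf_not_and_comp_le h2.bijective S

theorem stmt0_general {A : Type*} [Fintype A]
    (P1 P2 : PrefProfile A)
    (hs1 : P1.Strict) (hs2 : P2.Strict)
    (hacc : ∀ a : A, P1.acc a = P2.acc a)
    (M1 M2 : Finset (Sym2 A))
    (hM1 : IsStable P1 M1) (hperf1 : IsPerfect M1)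
    (hM2 : IsStable P2 M2) (hperf2 : IsPerfect M2) :
    {p : Sym2 A | p ∈ M1 ∧ ∀ b c : A, p = s(b, c) →
        ((∀ b', s(b, b') ∈ M2 → P2.Prefers b b' c) ∧
         (∀ c', s(c, c') ∈ M2 → P2.Prefers c c' b))}.ncard
      ≤ {a : A | ¬ SamePrefList P1 P2 a}.ncard := by
  set m1 := hperf1.partner
  set m2 := hperf2.partner
  have inv1 : Function.Involutive m1 := hperf1.partner_involutive hM1.1
  have inv2 : Function.Involutive m2 := hperf2.partner_involutive hM2.1
  have mk1 : ∀ a, s(a, m1 a) ∈ M1 := hperf1.mk_partner_mem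
  have mk2 : ∀ a, s(a, m2 a) ∈ M2 := hperf2.mk_partner_mem
  have hA12 : Acceptable P1 M2 := fun a b h => hacc a ▸ hM2.2.1 a b h
  have hA21 : Acceptable P2 M1 := fun a b h => (hacc a).symm ▸ hM1.2.1 a b h
  let R b c := ∀ b', s(b, b') ∈ M2 → P2.Prefers b b' c
  let X a := P2.Prefers a (m2 a) (m1 a)
  have hwalk := ncard_setOf_and_le_of_alternating inv1 inv2 (S := SamePrefList P1 P2) (X := X)
    (Y := fun a => P1.Prefers a (m1 a) (m2 a))
    (fun a ha hX => by
      simpa only [inv2 a] using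
        hM1.prefers_mate_of_samePrefList hs1 hA12 ha.symm (mk2 a) (mk1 a) (mk1 (m2 a)) hX)
    (fun a ha hY => by
      simpa only [X, inv1 a] using
        hM2.prefers_mate_of_samePrefList hs2 hA21 ha (mk1 a) (mk2 a) (mk2 (m1 a)) hY)
    (fun a ha hX hY =>
      lt_asymm hX ((ha.prefers_iff (hM1.2.1 a _ (mk1 a)) (hA12 a _ (mk2 a))).mp hY))
  refine Nat.le_of_mul_le_mul_left (le_trans ?_ hwalk) two_pos
  calc 2 * _ ≤ {a | R a (m1 a) ∧ R (m1 a) a}.ncard := hperf1.two_mul_ncard_pairs_le hM1.1 R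
    _ ≤ {a | X a ∧ X (m1 a)}.ncard :=
      Set.ncard_le_ncard fun a ⟨h, h'⟩ =>
        ⟨h _ (mk2 a), by simpa only [X, inv1 a] using h' _ (mk2 (m1 a))⟩

/-- The number of pairs `{b,c} ∈ M1` such that, w.r.t. `P2`, `b` strictly prefers
`M2(b)` to `c` and `c` strictly prefers `M2(c)` to `b`, is at most the number of
agents whose preference lists in `P1` and `P2` differ. -/
theorem stmt0 {A : Type*} [Fintype A] [DecidableEq A]
    (P1 P2 : PrefProfile A) (hl1 : P1.Lawful) (hl2 : P2.Lawful)
    (hs1 : P1.Strict) (hs2 : P2.Strict)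
    (hacc : ∀ a : A, P1.acc a = P2.acc a)
    (M1 M2 : Finset (Sym2 A))
    (hM1 : IsStable P1 M1) (hperf1 : IsPerfect M1)
    (hM2 : IsStable P2 M2) (hperf2 : IsPerfect M2) :
    {p : Sym2 A | p ∈ M1 ∧ ∀ b c : A, p = s(b, c) →
        ((∀ b', s(b, b') ∈ M2 → P2.Prefers b b' c) ∧
         (∀ c', s(c, c') ∈ M2 → P2.Prefers c c' b))}.ncard
      ≤ {a : A | ¬ SamePrefList P1 P2 a}.ncard :=
  stmt0_general P1 P2 hs1 hs2 hacc M1 M2 hM1 hperf1 hM2 hperf2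
end

section
/- Let (A, P) be an SR instance in which the preference list of every agent is derived from one common strict master list over A. Then (A, P) has exactly one stable matching. -/
/-!
Under a master list `ml`, let `x` be the `ml`-best agent that has an acceptable partner at all,
and let `y` be the `ml`-best agent acceptable to `x`. Then `x` and `y` are each other's first
choice, so every stable matching contains `{x, y}` (otherwise they block it), and adding
`{x, y}` to a stable matching of the agents other than `x, y` yields a stable matching.
Induction on the set of remaining agents gives existence and uniqueness at once.
-/

namespace PrefProfile

variable {A : Type*}

def IsDerivedFrom (P : PrefProfile A) (ml : A → ℕ) : Prop :=
  ∀ a : A, ∀ b ∈ P.acc a, ∀ c ∈ P.acc a, (P.Prefers a b c ↔ ml b < ml c)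

/-- `y` is the first choice of `x` among the agents of `S`. -/
def IsFavouriteIn (P : PrefProfile A) (S : Finset A) (x y : A) : Prop :=
  y ∈ S ∧ y ∈ P.acc x ∧ ∀ c ∈ S, c ∈ P.acc x → c ≠ y → P.Prefers x y c

end PrefProfile

/-- `M` is a stable matching of the sub-instance induced by `S`. -/
def IsStableOn {A : Type*} (P : PrefProfile A) (S : Finset A) (M : Finset (Sym2 A)) : Prop :=
  IsMatching M ∧ Acceptable P M ∧ (∀ a b : A, s(a, b) ∈ M → a ∈ S) ∧
    ∀ a ∈ S, ∀ b ∈ S, ¬ Blocks P M a b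

section

variable {A : Type*} {P : PrefProfile A} {S : Finset A} {M N : Finset (Sym2 A)} {a b x y : A}

theorem IsMatching.mono (hNM : N ⊆ M) (hM : IsMatching M) : IsMatching N :=
  ⟨fun p hp => hM.1 p (hNM hp), fun a b c hb hc => hM.2 a b c (hNM hb) (hNM hc)⟩

theorem IsMatching.insert_mk [DecidableEq A] (hM : IsMatching M) (hxy : x ≠ y)
    (hx : ∀ c, s(x, c) ∉ M) (hy : ∀ c, s(y, c) ∉ M) : IsMatching (insert s(x, y) M) := by
  refine ⟨?_, ?_⟩
  · intro p hp
    rcases Finset.mem_insert.mp hp with rfl | hp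
    · simpa using hxy
    · exact hM.1 p hp
  · intro a b c hb hc
    simp only [Finset.mem_insert, Sym2.eq_iff] at hb hc
    have := hM.2 a b c
    grind

theorem Acceptable.mono (hNM : N ⊆ M) (hM : Acceptable P M) : Acceptable P N :=
  fun a b h => hM a b (hNM h)

theorem Blocks.symm (h : Blocks P M a b) : Blocks P M b a :=
  ⟨h.2.1, h.1, h.2.2.2, h.2.2.1⟩

theorem Blocks.mono (hNM : N ⊆ M) (h : Blocks P M a b) : Blocks P N a b :=
  ⟨h.1, h.2.1, fun c hc => h.2.2.1 c (hNM hc), fun c hc => h.2.2.2 c (hNM hc)⟩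

theorem Blocks.of_erase [DecidableEq A] {p : Sym2 A} (ha : a ∉ p) (hb : b ∉ p)
    (h : Blocks P (M.erase p) a b) : Blocks P M a b := by
  refine ⟨h.1, h.2.1, fun c hc => h.2.2.1 c ?_, fun c hc => h.2.2.2 c ?_⟩
  · exact Finset.mem_erase.mpr ⟨fun hp => ha (hp ▸ Sym2.mem_mk_left a c), hc⟩
  · exact Finset.mem_erase.mpr ⟨fun hp => hb (hp ▸ Sym2.mem_mk_left b c), hc⟩

theorem PrefProfile.IsFavouriteIn.not_blocks (hxy : P.IsFavouriteIn S x y) (hM : s(x, y) ∈ M)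
    (hb : b ∈ S) : ¬ Blocks P M x b := by
  intro h
  have hby : P.Prefers x b y := h.2.2.1 y hM
  rcases eq_or_ne b y with rfl | hne
  · exact lt_irrefl _ hby
  · exact lt_asymm hby (hxy.2.2 b hb h.1 hne)

theorem isStableOn_univ_iff [Fintype A] : IsStableOn P Finset.univ M ↔ IsStable P M := by
  simp [IsStableOn, IsStable]

theorem IsStableOn.eq_empty (hS : ∀ a ∈ S, ∀ b ∈ S, b ∉ P.acc a) (hM : IsStableOn P S M) :
    M = ∅ := by
  refine Finset.eq_empty_of_forall_notMem fun p hp => ?_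
  induction p using Sym2.ind with
  | h a b => exact hS a (hM.2.2.1 a b hp) b (hM.2.2.1 b a (Sym2.eq_swap ▸ hp)) (hM.2.1 a b hp)

theorem isStableOn_empty (hS : ∀ a ∈ S, ∀ b ∈ S, b ∉ P.acc a) : IsStableOn P S ∅ :=
  ⟨⟨by simp, by simp⟩, by simp [Acceptable], by simp, fun a ha b hb h => hS a ha b hb h.1⟩

theorem IsStableOn.erase [DecidableEq A] (hM : IsStableOn P S M) (hxy : s(x, y) ∈ M) :
    IsStableOn P (S \ {x, y}) (M.erase s(x, y)) := by
  refine ⟨hM.1.mono (Finset.erase_subset _ _), hM.2.1.mono (Finset.erase_subset _ _), ?_, ?_⟩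
  · intro a b hab
    obtain ⟨hne, habM⟩ := Finset.mem_erase.mp hab
    have hax : a ≠ x := by
      rintro rfl
      exact hne (by rw [hM.1.2 a b y habM hxy])
    have hay : a ≠ y := by
      rintro rfl
      exact hne (by rw [hM.1.2 a b x habM (Sym2.eq_swap ▸ hxy), Sym2.eq_swap])
    simp [hM.2.2.1 a b habM, hax, hay]
  · intro a ha b hb h
    simp only [Finset.mem_sdiff, Finset.mem_insert, Finset.mem_singleton, not_or] at ha hb
    exact hM.2.2.2 a ha.1 b hb.1 (h.of_erase (by simp [ha.2.1, ha.2.2]) (by simp [hb.2.1, hb.2.2]))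

theorem IsStableOn.insert_mk [DecidableEq A] (hxy : P.IsFavouriteIn S x y)
    (hyx : P.IsFavouriteIn S y x) (hne : x ≠ y) (hM : IsStableOn P (S \ {x, y}) M) :
    IsStableOn P S (insert s(x, y) M) := by
  have hS : ∀ a b, s(a, b) ∈ M → a ∈ S ∧ a ≠ x ∧ a ≠ y := fun a b h => by
    simpa using hM.2.2.1 a b h
  refine ⟨hM.1.insert_mk hne (fun c h => (hS x c h).2.1 rfl) (fun c h => (hS y c h).2.2 rfl),
    ?_, ?_, ?_⟩
  · intro a b h
    rcases Finset.mem_insert.mp h with h | h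
    · rcases Sym2.eq_iff.mp h with ⟨rfl, rfl⟩ | ⟨rfl, rfl⟩
      exacts [hxy.2.1, hyx.2.1]
    · exact hM.2.1 a b h
  · intro a b h
    rcases Finset.mem_insert.mp h with h | h
    · rcases Sym2.eq_iff.mp h with ⟨rfl, rfl⟩ | ⟨rfl, rfl⟩
      exacts [hyx.1, hxy.1]
    · exact (hS a b h).1
  · have hxyM : s(x, y) ∈ insert s(x, y) M := Finset.mem_insert_self _ _
    have hyxM : s(y, x) ∈ insert s(x, y) M := Sym2.eq_swap ▸ hxyM
    have hblock_ne : ∀ a ∈ S, ∀ b ∈ S, Blocks P (insert s(x, y) M) a b → a ≠ x ∧ a ≠ y :=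
      fun a ha b hb h => ⟨fun hax => hxy.not_blocks hxyM hb (hax ▸ h),
        fun hay => hyx.not_blocks hyxM hb (hay ▸ h)⟩
    intro a ha b hb h
    obtain ⟨hax, hay⟩ := hblock_ne a ha b hb h
    obtain ⟨hbx, hby⟩ := hblock_ne b hb a ha h.symm
    exact hM.2.2.2 a (by simp [ha, hax, hay]) b (by simp [hb, hbx, hby])
      (h.mono (Finset.subset_insert _ _))

theorem IsStableOn.mk_mem (hxy : P.IsFavouriteIn S x y) (hyx : P.IsFavouriteIn S y x)
    (hM : IsStableOn P S M) : s(x, y) ∈ M := by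
  by_contra hxyM
  have hS : ∀ a c, s(a, c) ∈ M → c ∈ S := fun a c h => hM.2.2.1 c a (Sym2.eq_swap ▸ h)
  refine hM.2.2.2 x hyx.1 y hxy.1 ⟨hxy.2.1, hyx.2.1, fun c hc => ?_, fun c hc => ?_⟩
  · exact hxy.2.2 c (hS x c hc) (hM.2.1 x c hc) (by rintro rfl; exact hxyM hc)
  · exact hyx.2.2 c (hS y c hc) (hM.2.1 y c hc) (by rintro rfl; exact hxyM (Sym2.eq_swap ▸ hc))

end

section MasterList

variable {A : Type*} {P : PrefProfile A} {ml : A → ℕ}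

theorem PrefProfile.exists_isFavouriteIn_isFavouriteIn (hl : P.Lawful)
    (hml : Function.Injective ml) (hP : P.IsDerivedFrom ml) {S : Finset A}
    (hS : ∃ a ∈ S, ∃ b ∈ S, b ∈ P.acc a) :
    ∃ x y, P.IsFavouriteIn S x y ∧ P.IsFavouriteIn S y x := by
  classical
  have hprefers : ∀ {a b c}, b ∈ P.acc a → c ∈ P.acc a → c ≠ b → ml b ≤ ml c → P.Prefers a b c :=
    fun hb hc hcb h => (hP _ _ hb _ hc).mpr (h.lt_of_ne (hml.ne hcb.symm))
  set T := S.filter fun a => ∃ b ∈ S, b ∈ P.acc a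
  obtain ⟨x, hxT, hxmin⟩ := T.exists_min_image ml (by simpa [Finset.Nonempty, T] using hS)
  obtain ⟨hxS, hxacc⟩ := Finset.mem_filter.mp hxT
  obtain ⟨y, hyB, hymin⟩ := (P.acc x ∩ S).exists_min_image ml (by
    obtain ⟨b, hb, hbx⟩ := hxacc
    exact ⟨b, Finset.mem_inter.mpr ⟨hbx, hb⟩⟩)
  obtain ⟨hyx, hyS⟩ := Finset.mem_inter.mp hyB
  refine ⟨x, y, ⟨hyS, hyx, fun c hc hcx hcy => ?_⟩, ⟨hxS, hl.2 x y hyx, fun c hc hcy hcx => ?_⟩⟩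
  · exact hprefers hyx hcx hcy (hymin c (Finset.mem_inter.mpr ⟨hcx, hc⟩))
  · exact hprefers (hl.2 x y hyx) hcy hcx
      (hxmin c (Finset.mem_filter.mpr ⟨hc, y, hyS, hl.2 y c hcy⟩))

theorem existsUnique_isStableOn (hl : P.Lawful) (hml : Function.Injective ml)
    (hP : P.IsDerivedFrom ml) (S : Finset A) : ∃! M, IsStableOn P S M := by
  classical
  induction S using Finset.strongInduction with
  | H S ih =>
  by_cases hS : ∃ a ∈ S, ∃ b ∈ S, b ∈ P.acc a
  · obtain ⟨x, y, hxy, hyx⟩ := P.exists_isFavouriteIn_isFavouriteIn hl hml hP hS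
    have hne : x ≠ y := fun h => hl.1 x (h ▸ hxy.2.1)
    obtain ⟨M, hM, huniq⟩ := ih (S \ {x, y}) (Finset.sdiff_ssubset
      (by simp [Finset.insert_subset_iff, hxy.1, hyx.1]) (Finset.insert_nonempty x {y}))
    refine ⟨insert s(x, y) M, hM.insert_mk hxy hyx hne, fun N hN => ?_⟩
    have hxyN := hN.mk_mem hxy hyx
    rw [← huniq _ (hN.erase hxyN), Finset.insert_erase hxyN]
  · push Not at hS
    exact ⟨∅, isStableOn_empty hS, fun M hM => hM.eq_empty hS⟩

end MasterList

theorem stmt1_general {A : Type*} [Fintype A]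
    (P : PrefProfile A) (hl : P.Lawful)
    (ml : A → ℕ) (hml : Function.Injective ml)
    (hderived : ∀ a : A, ∀ b ∈ P.acc a, ∀ c ∈ P.acc a, (P.Prefers a b c ↔ ml b < ml c)) :
    ∃! M : Finset (Sym2 A), IsStable P M := by
  simpa only [isStableOn_univ_iff] using existsUnique_isStableOn hl hml hderived Finset.univ

/-- If the preference list of every agent of an SR instance is derived from one common
strict master list (encoded by an injective rank function `ml`), then the instance has
exactly one stable matching. -/
theorem stmt1 {A : Type*} [Fintype A] [DecidableEq A]
    (P : PrefProfile A) (hl : P.Lawful)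
    (ml : A → ℕ) (hml : Function.Injective ml)
    (hderived : ∀ a : A, ∀ b ∈ P.acc a, ∀ c ∈ P.acc a, (P.Prefers a b c ↔ ml b < ml c)) :
    ∃! M : Finset (Sym2 A), IsStable P M :=
  stmt1_general P hl ml hml hderived
end

section
/- Let (A, P) be an SR-T instance in which every agent has complete preferences derived from one common weak master list over A, and let A_1, …, A_q be the indifference classes of the master list, ordered from most preferred to least preferred. Then every weakly stable matching M satisfies: (1) every pair of M consists of two agents from the same indifference class or from two consecutive indifference classes A_{i−1} and A_i; (2) for every i ∈ {2, …, q}, the number of pairs of M with one agent in A_{i−1} and one agent in A_i equals 1 if |A_1| + … + |A_{i−1}| is odd, and equals 0 if it is even; (3) M leaves no agent unmatched if |A| is even, and leaves exactly one agent unmatched if |A| is odd, in which case the unmatched agent belongs to A_q. -/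
/-!
With a master list, stability says that of two distinct agents one is matched to a partner at
least as good as the other. Hence at most one agent is unmatched, and it lies in the last class.
Cut the list between classes `j - 1` and `j`: two agents of the upper part `{a | ml a < j}` both
matched into the lower part would block, so at most one pair crosses the cut, and the remaining
agents of the upper part are matched among themselves. The number of crossing pairs is therefore
the parity of the size of the upper part. A pair `{a, b}` skipping a class is impossible: an agent
`c` of the skipped class is preferred by `a` to `b`, so `c` has a partner `e` at least as good as
`a`, and then `a` and `e` both cross the cut just below the class of `a`.
-/

section MasterList

variable {A : Type*} {M : Finset (Sym2 A)}

/-- Only meaningful for matched `a`; otherwise an arbitrary agent. -/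
noncomputable def partner (M : Finset (Sym2 A)) (a : A) : A :=
  @Classical.epsilon A ⟨a⟩ fun b => s(a, b) ∈ M

theorem Matched.mk_partner_mem {a : A} (h : Matched M a) : s(a, partner M a) ∈ M :=
  Classical.epsilon_spec h

theorem Matched.matched_partner {a : A} (h : Matched M a) : Matched M (partner M a) :=
  ⟨a, Sym2.eq_swap ▸ h.mk_partner_mem⟩

namespace IsMatching

theorem ne_of_mem (hM : IsMatching M) {a b : A} (h : s(a, b) ∈ M) : a ≠ b := by
  rintro rfl
  exact hM.1 _ h (Sym2.mk_isDiag_iff.2 rfl)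

theorem partner_eq (hM : IsMatching M) {a b : A} (h : s(a, b) ∈ M) : partner M a = b :=
  hM.2 a _ b (Matched.mk_partner_mem ⟨b, h⟩) h

theorem partner_partner (hM : IsMatching M) {a : A} (h : Matched M a) :
    partner M (partner M a) = a :=
  hM.partner_eq (Sym2.eq_swap ▸ h.mk_partner_mem)

theorem even_ncard [Finite A] (hM : IsMatching M) {S : Set A}
    (hS : ∀ a ∈ S, Matched M a ∧ partner M a ∈ S) : Even S.ncard := by
  obtain ⟨s, rfl⟩ := S.toFinite.exists_finset_coe
  rw [Set.ncard_coe_finset, ← ZMod.natCast_eq_zero_iff_even, Finset.card_eq_sum_ones,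
    Nat.cast_sum, Nat.cast_one]
  refine Finset.sum_involution (fun a _ => partner M a) (fun _ _ => by decide)
    (fun a ha _ => (hM.ne_of_mem (hS a ha).1.mk_partner_mem).symm)
    (fun a ha => (hS a ha).2) (fun a ha => hM.partner_partner (hS a ha).1)

theorem ncard_pairs_eq_ncard_crossing [Finite A] (hM : IsMatching M) (f : A → ℕ) (j : ℕ) :
    {p : Sym2 A | p ∈ M ∧ ∃ a b : A, p = s(a, b) ∧ f a + 1 = j ∧ f b = j}.ncard =
      {a | Matched M a ∧ f a + 1 = j ∧ f (partner M a) = j}.ncard := by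
  have himage : {p : Sym2 A | p ∈ M ∧ ∃ a b : A, p = s(a, b) ∧ f a + 1 = j ∧ f b = j} =
      (fun a => s(a, partner M a)) '' {a | Matched M a ∧ f a + 1 = j ∧ f (partner M a) = j} := by
    ext p
    constructor
    · rintro ⟨hp, a, b, rfl, ha, hb⟩
      exact ⟨a, ⟨⟨b, hp⟩, ha, by rwa [hM.partner_eq hp]⟩, by dsimp only; rw [hM.partner_eq hp]⟩
    · rintro ⟨a, ⟨ha, haj, hpj⟩, rfl⟩
      exact ⟨ha.mk_partner_mem, a, _, rfl, haj, hpj⟩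
  rw [himage]
  apply Set.InjOn.ncard_image
  rintro a ⟨-, ha, -⟩ b ⟨-, -, hb⟩ hab
  rcases Sym2.eq_iff.1 hab with ⟨h, -⟩ | ⟨h, -⟩
  · exact h
  · rw [h] at ha
    omega

end IsMatching

/-- `f` is the level in a master list, smaller being better; this is the absence of blocking
pairs for the preferences derived from it. -/
def MasterListStable (M : Finset (Sym2 A)) (f : A → ℕ) : Prop :=
  ∀ a b : A, a ≠ b → (∃ c, s(a, c) ∈ M ∧ f c ≤ f b) ∨ (∃ c, s(b, c) ∈ M ∧ f c ≤ f a)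

theorem IsStable.masterListStable {P : PrefProfile A} {f : A → ℕ}
    (hcomplete : ∀ a b : A, b ∈ P.acc a ↔ b ≠ a)
    (hderived : ∀ a b c : A, b ≠ a → c ≠ a → (P.Prefers a b c ↔ f b < f c))
    (hM : IsStable P M) : MasterListStable M f := by
  intro a b hab
  by_contra! h
  refine hM.2.2 a b ⟨(hcomplete a b).2 hab.symm, (hcomplete b a).2 hab, fun c hc => ?_,
    fun c hc => ?_⟩
  · exact (hderived a b c hab.symm (hM.1.ne_of_mem hc).symm).2 (h.1 c hc)
  · exact (hderived b a c hab (hM.1.ne_of_mem hc).symm).2 (h.2 c hc)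

namespace MasterListStable

variable {f : A → ℕ}

theorem eq_of_not_matched (hs : MasterListStable M f) {a b : A} (ha : ¬ Matched M a)
    (hb : ¬ Matched M b) : a = b := by
  by_contra hab
  rcases hs a b hab with ⟨c, hc, -⟩ | ⟨c, hc, -⟩
  exacts [ha ⟨c, hc⟩, hb ⟨c, hc⟩]

theorem le_or_le_of_mem (hs : MasterListStable M f) (hM : IsMatching M) {x x' y y' : A}
    (hxy : x ≠ y) (hx : s(x, x') ∈ M) (hy : s(y, y') ∈ M) : f x' ≤ f y ∨ f y' ≤ f x := by
  rcases hs x y hxy with ⟨c, hc, hle⟩ | ⟨c, hc, hle⟩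
  · exact .inl (hM.2 x x' c hx hc ▸ hle)
  · exact .inr (hM.2 y y' c hy hc ▸ hle)

theorem le_of_not_matched (hs : MasterListStable M f) (hM : IsMatching M) {a : A}
    (ha : ¬ Matched M a) (c : A) : f c ≤ f a := by
  by_cases hc : Matched M c
  · obtain ⟨d, hcd⟩ := hc
    rw [Sym2.eq_swap] at hcd
    have had : a ≠ d := by
      rintro rfl
      exact ha ⟨c, hcd⟩
    rcases hs a d had with ⟨e, he, -⟩ | ⟨e, he, hle⟩
    · exact absurd ⟨e, he⟩ ha
    · rwa [hM.2 d e c he hcd] at hle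
  · rw [hs.eq_of_not_matched hc ha]

theorem matched_of_lt (hs : MasterListStable M f) (hM : IsMatching M) {a c : A}
    (h : f a < f c) : Matched M a := by
  by_contra ha
  exact absurd (hs.le_of_not_matched hM ha c) (not_le.2 h)

theorem le_of_lt_of_mem (hs : MasterListStable M f) (hM : IsMatching M) {a b c : A}
    (hac : f a < f c) (hab : s(a, b) ∈ M) : f b ≤ f c := by
  rcases hs a c (ne_of_apply_ne f hac.ne) with ⟨e, he, hle⟩ | ⟨e, he, hle⟩
  · rwa [hM.2 a b e hab he]
  · rw [Sym2.eq_swap] at he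
    by_cases hea : e = a
    · subst hea
      rw [hM.2 e b c hab he]
    · rcases hs.le_or_le_of_mem hM (Ne.symm hea) hab he with h | h <;> omega

theorem le_succ_of_mem (hs : MasterListStable M f) (hM : IsMatching M)
    (hdown : ∀ a, ∀ k ≤ f a, ∃ c, f c = k) {a b : A} (hab : s(a, b) ∈ M) :
    f b ≤ f a + 1 := by
  by_contra! h
  obtain ⟨c, hc⟩ := hdown b (f a + 1) h.le
  have := hs.le_of_lt_of_mem hM (hc ▸ lt_add_one (f a)) hab
  omega

theorem ncard_crossing_eq_mod_two [Finite A] (hs : MasterListStable M f) (hM : IsMatching M)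
    (hadj : ∀ a b, s(a, b) ∈ M → f b ≤ f a + 1) {j : ℕ} (hmatched : ∀ a, f a < j → Matched M a) :
    {a | Matched M a ∧ f a + 1 = j ∧ f (partner M a) = j}.ncard = {a | f a < j}.ncard % 2 := by
  set crossing := {a | Matched M a ∧ f a + 1 = j ∧ f (partner M a) = j}
  set inner := {a | f a < j ∧ f (partner M a) < j}
  have hsplit : {a | f a < j} = inner ∪ crossing := by
    ext a
    simp only [Set.mem_ofPred_eq, Set.mem_union, inner, crossing]
    constructor
    · intro ha
      have := hadj _ _ (hmatched a ha).mk_partner_mem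
      by_cases hp : f (partner M a) < j
      · exact .inl ⟨ha, hp⟩
      · exact .inr ⟨hmatched a ha, by omega, by omega⟩
    · rintro (h | h) <;> omega
  have hdisj : Disjoint inner crossing := Set.disjoint_left.2 fun a ha hc => by
    simp only [Set.mem_ofPred_eq, inner, crossing] at ha hc
    omega
  have hinner : Even inner.ncard := hM.even_ncard fun a ha =>
    ⟨hmatched a ha.1, ha.2, by rw [hM.partner_partner (hmatched a ha.1)]; exact ha.1⟩
  have hcrossing : crossing.ncard ≤ 1 := (Set.ncard_le_one (Set.toFinite _)).2
    fun a ⟨ha, ha₁, ha₂⟩ b ⟨hb, hb₁, hb₂⟩ => by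
      by_contra hab
      have := hs.le_or_le_of_mem hM hab ha.mk_partner_mem hb.mk_partner_mem
      omega
  rw [hsplit, Set.ncard_union_eq hdisj]
  obtain ⟨k, hk⟩ := hinner
  omega

theorem ncard_not_matched_eq_mod_two [Finite A] (hs : MasterListStable M f)
    (hM : IsMatching M) : {a | ¬ Matched M a}.ncard = Nat.card A % 2 := by
  have hsum := Set.ncard_add_ncard_compl {a | Matched M a}
  rw [Set.compl_ofPred] at hsum
  obtain ⟨k, hk⟩ := hM.even_ncard (S := {a | Matched M a}) fun a (ha : Matched M a) =>
    ⟨ha, ha.matched_partner⟩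
  have hle : {a | ¬ Matched M a}.ncard ≤ 1 :=
    (Set.ncard_le_one (Set.toFinite _)).2 fun a ha b hb => hs.eq_of_not_matched ha hb
  omega

end MasterListStable

end MasterList

/-- The indifference classes are the fibres of the surjection `ml : A → Fin q`, class `i` being
preferred to class `j` iff `i < j`; the paper's class `A_i` is `{a | (ml a : ℕ) = i - 1}`. -/
theorem stmt2_general {A : Type*} [Fintype A] (q : ℕ)
    (P : PrefProfile A)
    (ml : A → Fin q) (hsurj : Function.Surjective ml)
    (hcomplete : ∀ a b : A, b ∈ P.acc a ↔ b ≠ a)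
    (hderived : ∀ a b c : A, b ≠ a → c ≠ a → (P.Prefers a b c ↔ (ml b : ℕ) < (ml c : ℕ)))
    (M : Finset (Sym2 A)) (hM : IsStable P M) :
    -- (1) every pair joins two agents of the same or of consecutive indifference classes
    (∀ a b : A, s(a, b) ∈ M →
        ml a = ml b ∨ (ml a : ℕ) + 1 = (ml b : ℕ) ∨ (ml b : ℕ) + 1 = (ml a : ℕ)) ∧
    -- (2) the number of pairs crossing the boundary between the (0-based) classes
    -- `j-1` and `j` is 1 if the number of agents in classes `0, …, j-1` is odd, else 0
    (∀ j : ℕ, 0 < j → j < q →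
        (Odd ({a : A | (ml a : ℕ) < j}.ncard) →
          {p : Sym2 A | p ∈ M ∧ ∃ a b : A, p = s(a, b) ∧
              (ml a : ℕ) + 1 = j ∧ (ml b : ℕ) = j}.ncard = 1) ∧
        (Even ({a : A | (ml a : ℕ) < j}.ncard) →
          {p : Sym2 A | p ∈ M ∧ ∃ a b : A, p = s(a, b) ∧
              (ml a : ℕ) + 1 = j ∧ (ml b : ℕ) = j}.ncard = 0)) ∧
    -- (3) nobody is unmatched if `|A|` is even; exactly one agent, from the last
    -- indifference class, is unmatched if `|A|` is odd
    ((Even (Fintype.card A) → IsPerfect M) ∧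
     (Odd (Fintype.card A) → ∃ a : A, ¬ Matched M a ∧ (ml a : ℕ) = q - 1 ∧
        ∀ b : A, ¬ Matched M b → b = a)) := by
  have hs : MasterListStable M (fun a => (ml a : ℕ)) := hM.masterListStable hcomplete hderived
  have hclass : ∀ k < q, ∃ c, (ml c : ℕ) = k := fun k hk =>
    (hsurj ⟨k, hk⟩).imp fun c hc => by rw [hc]
  have hadj : ∀ a b, s(a, b) ∈ M → (ml b : ℕ) ≤ ml a + 1 := fun a b =>
    hs.le_succ_of_mem hM.1 fun a k hk => hclass k (by omega)
  have hunmatched := hs.ncard_not_matched_eq_mod_two hM.1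
  rw [Nat.card_eq_fintype_card] at hunmatched
  refine ⟨fun a b hab => ?_, fun j _ hjq => ?_, fun hev a => ?_, fun hodd => ?_⟩
  · have := hadj a b hab
    have := hadj b a (Sym2.eq_swap ▸ hab)
    omega
  · obtain ⟨c, hc⟩ := hclass j hjq
    rw [hM.1.ncard_pairs_eq_ncard_crossing, hs.ncard_crossing_eq_mod_two hM.1 hadj
      fun a ha => hs.matched_of_lt hM.1 (c := c) (show (ml a : ℕ) < ml c by omega)]
    exact ⟨Nat.odd_iff.1, Nat.even_iff.1⟩
  · by_contra ha
    rw [Nat.even_iff.1 hev, Set.ncard_eq_zero] at hunmatched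
    exact hunmatched.subset ha
  · obtain ⟨a, ha⟩ := Set.ncard_eq_one.1 (hunmatched.trans (Nat.odd_iff.1 hodd))
    have ham : ¬ Matched M a := ha.symm.subset rfl
    obtain ⟨c, hc⟩ := hclass (q - 1) (by have := (ml a).2; omega)
    have hca : (ml c : ℕ) ≤ ml a := hs.le_of_not_matched hM.1 ham c
    have := (ml a).2
    exact ⟨a, ham, by omega, fun b hb => hs.eq_of_not_matched hb ham⟩

/-- Structure of weakly stable matchings when all agents have complete preferences
derived from one common weak master list with indifference classes `A_1, …, A_q`
(encoded by a surjective class function `ml : A → Fin q`, class `i` (0-based) being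
preferred to class `j` iff `i < j`; 1-based class `A_i` is `{a | (ml a : ℕ) = i - 1}`). -/
theorem stmt2 {A : Type*} [Fintype A] [DecidableEq A] (q : ℕ)
    (P : PrefProfile A) (hl : P.Lawful)
    (ml : A → Fin q) (hsurj : Function.Surjective ml)
    (hcomplete : ∀ a b : A, b ∈ P.acc a ↔ b ≠ a)
    (hderived : ∀ a b c : A, b ≠ a → c ≠ a → (P.Prefers a b c ↔ (ml b : ℕ) < (ml c : ℕ)))
    (M : Finset (Sym2 A)) (hM : IsStable P M) :
    -- (1) every pair joins two agents of the same or of consecutive indifference classes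
    (∀ a b : A, s(a, b) ∈ M →
        ml a = ml b ∨ (ml a : ℕ) + 1 = (ml b : ℕ) ∨ (ml b : ℕ) + 1 = (ml a : ℕ)) ∧
    -- (2) the number of pairs crossing the boundary between the (0-based) classes
    -- `j-1` and `j` is 1 if the number of agents in classes `0, …, j-1` is odd, else 0
    (∀ j : ℕ, 0 < j → j < q →
        (Odd ({a : A | (ml a : ℕ) < j}.ncard) →
          {p : Sym2 A | p ∈ M ∧ ∃ a b : A, p = s(a, b) ∧
              (ml a : ℕ) + 1 = j ∧ (ml b : ℕ) = j}.ncard = 1) ∧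
        (Even ({a : A | (ml a : ℕ) < j}.ncard) →
          {p : Sym2 A | p ∈ M ∧ ∃ a b : A, p = s(a, b) ∧
              (ml a : ℕ) + 1 = j ∧ (ml b : ℕ) = j}.ncard = 0)) ∧
    -- (3) nobody is unmatched if `|A|` is even; exactly one agent, from the last
    -- indifference class, is unmatched if `|A|` is odd
    ((Even (Fintype.card A) → IsPerfect M) ∧
     (Odd (Fintype.card A) → ∃ a : A, ¬ Matched M a ∧ (ml a : ℕ) = q - 1 ∧
        ∀ b : A, ¬ Matched M b → b = a)) :=
  stmt2_general q P ml hsurj hcomplete hderived M hM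
end

section
/- Let (A, P) be an SR instance whose agent set is partitioned as A = F ⊎ S such that every agent in F has complete preferences derived from one common strict master list over A (the agents in S, called outliers, may have arbitrary preferences). If M and M' are stable matchings of (A, P) that contain exactly the same set of pairs with both endpoints in S, then M = M'. -/
/-!
Suppose `M ≠ M'` and let `x` be an agent with the smallest master-list value among those whose
partner differs in `M` and `M'`; by symmetry `x` has an `M`-partner `z` that it prefers to its
`M'`-partner. Stability of `M'` gives `z` an `M'`-partner `w` that it prefers to `x`, and `w` has
changed partner, so `ml x < ml w`; hence `z` is an outlier and `x` is not. Stability of `M` then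
shows that every other non-outlier whose partner changed has larger master-list value than `z`.

Now let `s` be an outlier with `ml s ≤ ml z` that prefers its `M'`-partner `g` to its `M`-partner.
Then `g` is not an outlier, so by stability of `M` the `M`-partner `c` of `g` satisfies
`ml c < ml s`; by the previous paragraph `c` is an outlier, and stability of `M'` gives `c` an
`M'`-partner it prefers to `g`. Starting from `s = z` this is an infinite descent in `ml`.
-/

namespace PrefProfile

variable {A : Type*} (P : PrefProfile A)

def FollowsMasterList (ml : A → ℕ) (a : A) : Prop :=
  (∀ b : A, b ∈ P.acc a ↔ b ≠ a) ∧ ∀ b c : A, b ≠ a → c ≠ a → (P.Prefers a b c ↔ ml b < ml c)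

/-- Vacuous when `a` is unmatched in `M`. -/
def PrefersToPartner (M : Finset (Sym2 A)) (a b : A) : Prop := ∀ c, s(a, c) ∈ M → P.Prefers a b c

variable {P}

theorem not_prefers_self (a b : A) : ¬ P.Prefers a b b := lt_irrefl _

theorem Strict.prefers_of_not_prefers_s3 (hP : P.Strict) {a b c : A} (hb : b ∈ P.acc a)
    (hc : c ∈ P.acc a) (hbc : b ≠ c) (h : ¬ P.Prefers a b c) : P.Prefers a c b :=
  (Nat.le_of_not_lt h).lt_of_ne fun he => hbc (hP a c hc b hb he).symm

end PrefProfile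

open PrefProfile

def PartnerChanged {A : Type*} (M M' : Finset (Sym2 A)) (a : A) : Prop :=
  ∃ b, Xor (s(a, b) ∈ M) (s(a, b) ∈ M')

section Matchings

variable {A : Type*} {P : PrefProfile A} {M M' : Finset (Sym2 A)} {a b c : A}

theorem IsMatching.ne_of_mem_s3 (hM : IsMatching M) (h : s(a, b) ∈ M) : a ≠ b :=
  fun he => hM.1 _ h (Sym2.mk_isDiag_iff.2 he)

theorem IsMatching.not_mem_of_ne (hM : IsMatching M) (hb : s(a, b) ∈ M) (hc : c ≠ b) :
    s(a, c) ∉ M :=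
  fun h => hc (hM.2 a c b h hb)

theorem IsMatching.prefersToPartner (hM : IsMatching M) (hb : s(a, b) ∈ M)
    (h : P.Prefers a c b) : P.PrefersToPartner M a c :=
  fun _ hd => hM.2 a b _ hb hd ▸ h

theorem partnerChanged_comm : PartnerChanged M M' a ↔ PartnerChanged M' M a := by
  simp only [PartnerChanged, xor_comm]

theorem PartnerChanged.of_xor (h : Xor (s(a, b) ∈ M) (s(a, b) ∈ M')) : PartnerChanged M M' b :=
  ⟨a, by rwa [Sym2.eq_swap]⟩

theorem IsMatching.not_mem_of_partnerChanged (hM : IsMatching M) (hM' : IsMatching M')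
    (ha : PartnerChanged M M' a) (hab : s(a, b) ∈ M) : s(a, b) ∉ M' := by
  intro hab'
  obtain ⟨c, hc⟩ := ha
  rcases hc with ⟨hc, hc'⟩ | ⟨hc', hc⟩
  · exact hc' (hM.2 a b c hab hc ▸ hab')
  · exact hc (hM'.2 a b c hab' hc' ▸ hab)

theorem exists_partnerChanged_of_ne (h : M ≠ M') : ∃ a, PartnerChanged M M' a := by
  by_contra! hall
  refine h (Finset.ext fun p => ?_)
  induction p using Sym2.ind with
  | _ a b => exact not_not.1 ((xor_iff_not_iff _ _).not.1 (not_exists.1 (hall a) b))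

theorem IsStable.exists_not_prefers (hM : IsStable P M) (hab : b ∈ P.acc a) (hba : a ∈ P.acc b)
    (ha : P.PrefersToPartner M a b) : ∃ c, s(b, c) ∈ M ∧ ¬ P.Prefers b a c := by
  by_contra! hb
  exact hM.2.2 a b ⟨hab, hba, ha, hb⟩

theorem IsStable.exists_prefersToPartner (hP : P.Strict) (hM : IsStable P M) (hM' : IsStable P M')
    (hab : s(a, b) ∈ M) (ha : P.PrefersToPartner M' a b) :
    ∃ c, s(b, c) ∈ M' ∧ P.PrefersToPartner M b c := by
  have hba : s(b, a) ∈ M := Sym2.eq_swap ▸ hab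
  obtain ⟨c, hbc, hc⟩ := hM'.exists_not_prefers (hM.2.1 a b hab) (hM.2.1 b a hba) ha
  have hca : c ≠ a := by
    rintro rfl
    exact not_prefers_self c b (ha b (Sym2.eq_swap ▸ hbc))
  exact ⟨c, hbc, hM.1.prefersToPartner hba
    (hP.prefers_of_not_prefers_s3 (hM.2.1 b a hba) (hM'.2.1 b c hbc) hca.symm hc)⟩

theorem exists_mem_prefersToPartner_of_partnerChanged (hP : P.Strict) (hM : IsStable P M)
    (hM' : IsStable P M') (ha : PartnerChanged M M' a) :
    ∃ b, s(a, b) ∈ M ∧ P.PrefersToPartner M' a b ∨ s(a, b) ∈ M' ∧ P.PrefersToPartner M a b := by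
  wlog hb : ∃ b, s(a, b) ∈ M ∧ s(a, b) ∉ M' generalizing M M'
  · obtain ⟨b, hb'⟩ := ha
    obtain ⟨c, hc⟩ := this hM' hM (partnerChanged_comm.1 ⟨b, hb'⟩)
      (hb'.elim (fun h => absurd ⟨b, h⟩ hb) (fun h => ⟨b, h⟩))
    exact ⟨c, hc.symm⟩
  obtain ⟨b, hab, hab'⟩ := hb
  by_cases h : P.PrefersToPartner M' a b
  · exact ⟨b, .inl ⟨hab, h⟩⟩
  simp only [PrefersToPartner, not_forall, exists_prop] at h
  obtain ⟨c, hac, hbc⟩ := h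
  have hcb : b ≠ c := by
    rintro rfl
    exact hab' hac
  exact ⟨c, .inr ⟨hac, hM.1.prefersToPartner hab
    (hP.prefers_of_not_prefers_s3 (hM.2.1 a b hab) (hM'.2.1 a c hac) hcb hbc)⟩⟩

end Matchings

section MasterList

variable {A : Type*} {P : PrefProfile A} {S : Finset A} {ml : A → ℕ} {M M' : Finset (Sym2 A)}
  {x z : A}

theorem ml_lt_of_partnerChanged (hml : Function.Injective ml)
    (hF : ∀ a ∉ S, P.FollowsMasterList ml a) (hM : IsStable P M) (hM' : IsMatching M')
    (hxz : s(x, z) ∈ M) (hxS : x ∉ S) (hzS : z ∈ S)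
    (hxmin : ∀ d, PartnerChanged M M' d → ml x ≤ ml d)
    {y : A} (hyS : y ∉ S) (hy : PartnerChanged M M' y) (hyx : y ≠ x) : ml z < ml y := by
  have hyz : y ≠ z := fun he => hyS (he ▸ hzS)
  have hy_pref : P.PrefersToPartner M y x := by
    intro c hyc
    have hcx : c ≠ x := by
      rintro rfl
      exact hyz (hM.1.2 c z y hxz (Sym2.eq_swap ▸ hyc)).symm
    have hc : PartnerChanged M M' c :=
      .of_xor (.inl ⟨hyc, hM.1.not_mem_of_partnerChanged hM' hy hyc⟩)
    exact ((hF y hyS).2 x c hyx.symm (hM.1.ne_of_mem_s3 hyc).symm).2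
      ((hxmin c hc).lt_of_ne (hml.ne hcx.symm))
  obtain ⟨c, hxc, hyc⟩ := hM.exists_not_prefers ((hF y hyS).1 x |>.2 hyx.symm)
    ((hF x hxS).1 y |>.2 hyx) hy_pref
  obtain rfl : z = c := hM.1.2 x z c hxz hxc
  exact (not_lt.1 fun h => hyc (((hF x hxS).2 y z hyx (hM.1.ne_of_mem_s3 hxz).symm).2 h)).lt_of_ne
    (hml.ne hyz.symm)

theorem exists_ml_lt_of_prefersToPartner (hP : P.Strict) (hml : Function.Injective ml)
    (hF : ∀ a ∉ S, P.FollowsMasterList ml a) (hM : IsStable P M) (hM' : IsStable P M')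
    (hSS : ∀ a ∈ S, ∀ b ∈ S, s(a, b) ∈ M ↔ s(a, b) ∈ M')
    (hxz : s(x, z) ∈ M) (hzS : z ∈ S)
    (hz_lt : ∀ y ∉ S, PartnerChanged M M' y → y ≠ x → ml z < ml y)
    {s g : A} (hsS : s ∈ S) (hsz : ml s ≤ ml z) (hsg : s(s, g) ∈ M')
    (hs : P.PrefersToPartner M s g) :
    ∃ c ∈ S, ml c < ml s ∧ ∃ d, s(c, d) ∈ M' ∧ P.PrefersToPartner M c d := by
  have hgS : g ∉ S := fun hgS => not_prefers_self s g (hs g ((hSS s hsS g hgS).2 hsg))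
  have hgs : g ≠ s := (hM'.1.ne_of_mem_s3 hsg).symm
  have hgs' : s(g, s) ∈ M' := Sym2.eq_swap ▸ hsg
  obtain ⟨c, hgc, hc⟩ :=
    hM.exists_not_prefers (hM'.2.1 s g hsg) (hM'.2.1 g s hgs') hs
  have hcs : c ≠ s := by
    rintro rfl
    exact not_prefers_self c g (hs g (Sym2.eq_swap ▸ hgc))
  have hcg : c ≠ g := (hM.1.ne_of_mem_s3 hgc).symm
  have hcs_lt : ml c < ml s :=
    (not_lt.1 fun h => hc (((hF g hgS).2 s c hgs.symm hcg).2 h)).lt_of_ne' (hml.ne hcs.symm)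
  have hcx : c ≠ x := by
    rintro rfl
    exact hgS (hM.1.2 c z g hxz (Sym2.eq_swap ▸ hgc) ▸ hzS)
  have hcS : c ∈ S := by
    by_contra hcS
    have hc_changed : PartnerChanged M M' c :=
      .of_xor (.inl ⟨hgc, hM'.1.not_mem_of_ne hgs' hcs⟩)
    exact absurd (hz_lt c hcS hc_changed hcx) (by omega)
  have hg : P.PrefersToPartner M' g c :=
    hM'.1.prefersToPartner hgs' (((hF g hgS).2 c s hcg hgs.symm).2 hcs_lt)
  exact ⟨c, hcS, hcs_lt, hM.exists_prefersToPartner hP hM' hgc hg⟩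

theorem not_prefersToPartner_of_minimal (hP : P.Strict) (hml : Function.Injective ml)
    (hF : ∀ a ∉ S, P.FollowsMasterList ml a) (hM : IsStable P M) (hM' : IsStable P M')
    (hSS : ∀ a ∈ S, ∀ b ∈ S, s(a, b) ∈ M ↔ s(a, b) ∈ M') (hxz : s(x, z) ∈ M)
    (hxmin : ∀ d, PartnerChanged M M' d → ml x ≤ ml d) : ¬ P.PrefersToPartner M' x z := by
  intro hx
  obtain ⟨w, hzw, hw⟩ := hM.exists_prefersToPartner hP hM' hxz hx
  have hzx : s(z, x) ∈ M := Sym2.eq_swap ▸ hxz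
  have hwx : P.Prefers z w x := hw x hzx
  have hxw : ml x < ml w := by
    have hw_ne : w ≠ x := fun he => not_prefers_self z x (he ▸ hwx)
    exact (hxmin w (.of_xor (.inr ⟨hzw, hM.1.not_mem_of_ne hzx hw_ne⟩))).lt_of_ne
      (hml.ne hw_ne.symm)
  have hzS : z ∈ S := by
    by_contra hzS
    have := ((hF z hzS).2 w x (hM'.1.ne_of_mem_s3 hzw).symm (hM.1.ne_of_mem_s3 hzx).symm).1 hwx
    omega
  have hxS : x ∉ S := fun hxS => not_prefers_self x z (hx z ((hSS x hxS z hzS).1 hxz))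
  have hz_lt : ∀ y ∉ S, PartnerChanged M M' y → y ≠ x → ml z < ml y := fun _ hyS hy hyx =>
    ml_lt_of_partnerChanged hml hF hM hM'.1 hxz hxS hzS hxmin hyS hy hyx
  suffices ∀ n, ∀ s ∈ S, ml s = n → ml s ≤ ml z →
      ∀ g, s(s, g) ∈ M' → ¬ P.PrefersToPartner M s g from this _ z hzS rfl le_rfl w hzw hw
  intro n
  induction n using Nat.strong_induction_on with
  | _ n ih =>
    rintro s hsS rfl hsz g hsg hs
    obtain ⟨c, hcS, hcs, d, hcd, hc⟩ :=
      exists_ml_lt_of_prefersToPartner hP hml hF hM hM' hSS hxz hzS hz_lt hsS hsz hsg hs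
    exact ih _ hcs c hcS rfl (by omega) d hcd hc

end MasterList

theorem stmt3_general {A : Type*}
    (P : PrefProfile A) (hstrict : P.Strict)
    (S : Finset A) (ml : A → ℕ) (hml : Function.Injective ml)
    (hF : ∀ a ∉ S, (∀ b : A, b ∈ P.acc a ↔ b ≠ a) ∧
        ∀ b c : A, b ≠ a → c ≠ a → (P.Prefers a b c ↔ ml b < ml c))
    (M M' : Finset (Sym2 A)) (hM : IsStable P M) (hM' : IsStable P M')
    (hsame : {p : Sym2 A | p ∈ M ∧ ∀ a ∈ p, a ∈ S} =
             {p : Sym2 A | p ∈ M' ∧ ∀ a ∈ p, a ∈ S}) :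
    M = M' := by
  have hSS : ∀ a ∈ S, ∀ b ∈ S, s(a, b) ∈ M ↔ s(a, b) ∈ M' := fun a ha b hb => by
    simpa [ha, hb] using Set.ext_iff.1 hsame s(a, b)
  by_contra hne
  obtain ⟨x, hx, hxmin⟩ := (measure ml).wf.has_min {d | PartnerChanged M M' d}
    (exists_partnerChanged_of_ne hne)
  have hxmin : ∀ d, PartnerChanged M M' d → ml x ≤ ml d := fun d hd => not_lt.1 (hxmin d hd)
  obtain ⟨z, ⟨hxz, hz⟩ | ⟨hxz, hz⟩⟩ :=
    exists_mem_prefersToPartner_of_partnerChanged hstrict hM hM' hx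
  · exact not_prefersToPartner_of_minimal hstrict hml hF hM hM' hSS hxz hxmin hz
  · exact not_prefersToPartner_of_minimal hstrict hml hF hM' hM
      (fun a ha b hb => (hSS a ha b hb).symm) hxz
      (fun d hd => hxmin d (partnerChanged_comm.1 hd)) hz

/-- If all agents outside the outlier set `S` have complete preferences derived from a
common strict master list `ml`, then two stable matchings containing exactly the same
set of pairs with both endpoints in `S` are equal. -/
theorem stmt3 {A : Type*} [Fintype A] [DecidableEq A]
    (P : PrefProfile A) (hl : P.Lawful) (hstrict : P.Strict)
    (S : Finset A) (ml : A → ℕ) (hml : Function.Injective ml)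
    (hF : ∀ a ∉ S, (∀ b : A, b ∈ P.acc a ↔ b ≠ a) ∧
        ∀ b c : A, b ≠ a → c ≠ a → (P.Prefers a b c ↔ ml b < ml c))
    (M M' : Finset (Sym2 A)) (hM : IsStable P M) (hM' : IsStable P M')
    (hsame : {p : Sym2 A | p ∈ M ∧ ∀ a ∈ p, a ∈ S} =
             {p : Sym2 A | p ∈ M' ∧ ∀ a ∈ p, a ∈ S}) :
    M = M' :=
  stmt3_general P hstrict S ml hml hF M M' hM hM' hsame
end

section
/- Let I = (A, P1, P2, M1, k) be an ISR instance such that P2 admits a stable matching. Let A_1 be the set of agents unmatched by M1 and let A_2 be the set of agents unmatched by every stable matching with respect to P2. Construct I' = (A', P1', P2', M1', k') as follows: A' = A ∪ {a' : a ∈ A_2}, with one new agent a' for each a ∈ A_2; in both P1' and P2' each new agent a' accepts only a, and a' is appended at the end of a's preference list in both profiles, while all other preferences are unchanged; M1' = M1 ∪ {{a, a'} : a ∈ A_1 ∩ A_2}; k' = k + |A_2 ∖ A_1|. Then: (a) M1' is stable with respect to P1'; (b) P2' admits a perfect stable matching; and (c) there is a matching M2 stable with respect to P2 with |M1 △ M2|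 ≤ k if and only if there is a matching M2' stable with respect to P2' with |M1' △ M2'| ≤ k'. -/
noncomputable section
open Classical

variable {A : Type*} [Fintype A] [DecidableEq A]

/-- The set of agents unmatched by every stable matching w.r.t. `P2`. -/
def A2set (P2 : PrefProfile A) : Finset A :=
  Finset.univ.filter fun a => ∀ M : Finset (Sym2 A), IsStable P2 M → ¬ Matched M a

/-- The set of agents unmatched by `M1`. -/
def A1set (M1 : Finset (Sym2 A)) : Finset A :=
  Finset.univ.filter fun a => ¬ Matched M1 a

/-- The extension of a profile `P` on `A` to the agent set `A ∪ {a' : a ∈ A2}`: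
every new agent `a'` (represented as `Sum.inr ⟨a, _⟩`) accepts only `a`, and `a'`
is appended at the very end of `a`'s preference list; all other preferences are
unchanged. -/
def extProfile5 (P2 P : PrefProfile A) : PrefProfile (A ⊕ {a : A // a ∈ A2set P2}) where
  acc x :=
    match x with
    | Sum.inl a =>
        (P.acc a).image Sum.inl ∪
          (if h : a ∈ A2set P2 then {Sum.inr ⟨a, h⟩} else ∅)
    | Sum.inr b => {Sum.inl b.1}
  rank x y :=
    match x, y with
    | Sum.inl a, Sum.inl b => P.rank a b
    | Sum.inl a, Sum.inr _ => ((P.acc a).sup (P.rank a)) + 1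
    | Sum.inr _, _ => 0

/-- `M1' = M1 ∪ {{a, a'} : a ∈ A1 ∩ A2}`. -/
def extM5 (P2 : PrefProfile A) (M1 : Finset (Sym2 A)) :
    Finset (Sym2 (A ⊕ {a : A // a ∈ A2set P2})) :=
  M1.image (Sym2.map Sum.inl) ∪
    ((A1set M1 ∩ A2set P2).attach.image fun a =>
      s(Sum.inl a.1, Sum.inr ⟨a.1, (Finset.mem_inter.mp a.2).2⟩))

/-!
Giving every agent `a ∈ A2` a private copy `a'`, ranked last, changes nothing among the old
agents. A stable matching of `P2'` is therefore a stable matching `M` of `P2` together with all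
pairs `{a, a'}`: every `a ∈ A2` is unmatched by `M` (rural hospitals theorem) and would block
with `a'` if `a'` were left alone. This correspondence makes `P2'`'s stable matchings perfect and
shifts every symmetric difference with `M1'` by exactly the pairs `{a, a'}`, `a ∈ A2 \ A1`.
-/

section

variable {α : Type*} {P : PrefProfile α} {M N : Finset (Sym2 α)} {a b c : α}

lemma pair_mem_comm : s(a, b) ∈ M ↔ s(b, a) ∈ M := by
  rw [Sym2.eq_swap]

lemma IsMatching.eq_of_mem_left (hM : IsMatching M) (hb : s(b, a) ∈ M) (hc : s(c, a) ∈ M) :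
    b = c :=
  hM.2 a b c (pair_mem_comm.mp hb) (pair_mem_comm.mp hc)

lemma blocks_comm : Blocks P M a b ↔ Blocks P M b a := by
  unfold Blocks
  tauto

def PrefersMatching (P : PrefProfile α) (M N : Finset (Sym2 α)) (a : α) : Prop :=
  ∃ b, s(a, b) ∈ M ∧ ∀ c, s(a, c) ∈ N → P.Prefers a b c

/-- Otherwise `{a, b}` would block `N`. -/
lemma PrefersMatching.partner (hs : P.Strict) (hM : IsMatching M) (hMP : Acceptable P M)
    (hN : IsStable P N) (ha : PrefersMatching P M N a) (hab : s(a, b) ∈ M) :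
    PrefersMatching P N M b := by
  obtain ⟨b', hab', hpref⟩ := ha
  obtain rfl : b = b' := hM.2 a b b' hab hab'
  have hba : a ∈ P.acc b := hMP b a (pair_mem_comm.mp hab)
  obtain ⟨c, hbc, hcb⟩ : ∃ c, s(b, c) ∈ N ∧ ¬ P.Prefers b a c := by
    by_contra! h
    exact hN.2.2 a b ⟨hMP a b hab, hba, hpref, h⟩
  have hca : c ≠ a := by
    rintro rfl
    exact lt_irrefl _ (hpref b (pair_mem_comm.mp hbc))
  refine ⟨c, hbc, fun d hbd => ?_⟩
  obtain rfl : a = d := hM.2 b a d (pair_mem_comm.mp hab) hbd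
  exact (not_lt.mp hcb).lt_of_ne fun h => hca (hs b c (hN.2.1 b c hbc) a hba h)

/-- The agents preferring `M` to `N` are matched by `M` injectively into those preferring `N`
to `M`, and vice versa by `N`; an agent matched by `M` but not by `N` prefers `M` and is not
an `N`-partner of anybody, which makes the second injection strict. -/
theorem IsStable.matched_of_matched [Fintype α] (hs : P.Strict) (hM : IsStable P M)
    (hN : IsStable P N) (ha : Matched M a) : Matched N a := by
  by_contra haN
  set S := Finset.univ.filter (PrefersMatching P M N)
  set T := Finset.univ.filter (PrefersMatching P N M)
  have haS : a ∈ S := by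
    obtain ⟨b, hab⟩ := ha
    exact Finset.mem_filter.mpr
      ⟨Finset.mem_univ a, b, hab, fun c hac => (haN ⟨c, hac⟩).elim⟩
  have hST : S.card ≤ T.card := by
    refine Finset.card_le_card_of_forall_subsingleton (fun x y => s(x, y) ∈ M) ?_
      fun y _ x₁ hx₁ x₂ hx₂ => hM.1.eq_of_mem_left hx₁.2 hx₂.2
    intro x hx
    obtain ⟨y, hxy, -⟩ := (Finset.mem_filter.mp hx).2
    exact ⟨y, Finset.mem_filter.mpr ⟨Finset.mem_univ y,
      (Finset.mem_filter.mp hx).2.partner hs hM.1 hM.2.1 hN hxy⟩, hxy⟩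
  have hTS : T.card ≤ (S.erase a).card := by
    refine Finset.card_le_card_of_forall_subsingleton (fun y x => s(y, x) ∈ N) ?_
      fun x _ y₁ hy₁ y₂ hy₂ => hN.1.eq_of_mem_left hy₁.2 hy₂.2
    intro y hy
    obtain ⟨x, hyx, -⟩ := (Finset.mem_filter.mp hy).2
    refine ⟨x, Finset.mem_erase.mpr ⟨?_, Finset.mem_filter.mpr ⟨Finset.mem_univ x,
      (Finset.mem_filter.mp hy).2.partner hs hN.1 hN.2.1 hM hyx⟩⟩, hyx⟩
    rintro rfl
    exact haN ⟨y, pair_mem_comm.mp hyx⟩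
  have := Finset.card_erase_of_mem haS
  have := Finset.card_pos.mpr ⟨a, haS⟩
  omega

end

lemma exists_map_inl_eq_iff {α β : Type*} {Q : Sym2 α → Prop} {x y : α ⊕ β} :
    (∃ p, Q p ∧ Sym2.map Sum.inl p = s(x, y)) ↔
      ∃ a b, x = Sum.inl a ∧ y = Sum.inl b ∧ Q s(a, b) := by
  simp only [Sym2.exists, Sym2.map_mk, Sym2.eq_iff]
  constructor
  · rintro ⟨a, b, hab, ⟨rfl, rfl⟩ | ⟨rfl, rfl⟩⟩
    exacts [⟨a, b, rfl, rfl, hab⟩, ⟨b, a, rfl, rfl, Sym2.eq_swap ▸ hab⟩]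
  · rintro ⟨a, b, rfl, rfl, hab⟩
    exact ⟨a, b, hab, .inl ⟨rfl, rfl⟩⟩

def restrictMatching {α β : Type*} (M' : Finset (Sym2 (α ⊕ β))) : Finset (Sym2 α) :=
  M'.preimage (Sym2.map Sum.inl) (Sym2.map.injective Sum.inl_injective).injOn

lemma mem_restrictMatching {α β : Type*} {M' : Finset (Sym2 (α ⊕ β))} {a a' : α} :
    s(a, a') ∈ restrictMatching M' ↔ s(Sum.inl a, Sum.inl a') ∈ M' := by
  simp [restrictMatching]

section

variable {α : Type*} [Fintype α] {P2 : PrefProfile α} {M : Finset (Sym2 α)} {a : α}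

lemma not_matched_of_mem_A2set (ha : a ∈ A2set P2) (hM : IsStable P2 M) : ¬ Matched M a :=
  (Finset.mem_filter.mp ha).2 M hM

lemma matched_of_not_mem_A2set (hs : P2.Strict) (ha : a ∉ A2set P2) (hM : IsStable P2 M) :
    Matched M a := by
  simp only [A2set, Finset.mem_filter, Finset.mem_univ, true_and, not_forall, not_not] at ha
  obtain ⟨N, hN, haN⟩ := ha
  exact hN.matched_of_matched hs hM haN

def copyPair (b : {a : α // a ∈ A2set P2}) : Sym2 (α ⊕ {a : α // a ∈ A2set P2}) :=
  s(Sum.inl b.1, Sum.inr b)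

lemma copyPair_injective : Function.Injective (copyPair (P2 := P2)) := by
  intro b b' h
  simpa [copyPair] using h

end

section

variable {P2 P : PrefProfile A} {M : Finset (Sym2 A)} {a a' : A} {b : {a : A // a ∈ A2set P2}}
  {y : A ⊕ {a : A // a ∈ A2set P2}}

lemma inl_mem_acc_extProfile5 :
    Sum.inl a' ∈ (extProfile5 P2 P).acc (Sum.inl a) ↔ a' ∈ P.acc a := by
  simp only [extProfile5, Finset.mem_union, Finset.mem_image, Sum.inl.injEq, exists_eq_right]
  split_ifs <;> simp

lemma inr_mem_acc_extProfile5 :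
    Sum.inr b ∈ (extProfile5 P2 P).acc (Sum.inl a) ↔ a = b.1 := by
  simp only [extProfile5, Finset.mem_union, Finset.mem_image, reduceCtorEq, and_false,
    exists_false, false_or]
  split_ifs with ha <;> aesop

lemma mem_acc_extProfile5_inr : y ∈ (extProfile5 P2 P).acc (Sum.inr b) ↔ y = Sum.inl b.1 := by
  simp [extProfile5]

lemma prefers_extProfile5_inl_inr (ha' : a' ∈ P.acc a) :
    (extProfile5 P2 P).Prefers (Sum.inl a) (Sum.inl a') (Sum.inr b) :=
  Nat.lt_succ_of_le (Finset.le_sup ha')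

lemma not_prefers_extProfile5_inr (hy : y ∈ (extProfile5 P2 P).acc (Sum.inl a)) :
    ¬ (extProfile5 P2 P).Prefers (Sum.inl a) (Sum.inr b) y := by
  cases y with
  | inl a' => exact not_lt.mpr (prefers_extProfile5_inl_inr (inl_mem_acc_extProfile5.mp hy)).le
  | inr _ => exact lt_irrefl _

end

section

variable {P2 P : PrefProfile A} {M M2 : Finset (Sym2 A)} {a : A} {b : {a : A // a ∈ A2set P2}}
  {y : A ⊕ {a : A // a ∈ A2set P2}}

/-- This is `M1'` for `M = M1`, and a perfect stable matching of `P2'` for `M` stable in `P2`. -/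
def extMatching (P2 : PrefProfile A) (M : Finset (Sym2 A)) :
    Finset (Sym2 (A ⊕ {a : A // a ∈ A2set P2})) :=
  M.image (Sym2.map Sum.inl) ∪
    ((A2set P2).attach.filter fun b => ¬ Matched M b.1).image copyPair

lemma inl_inl_mem_extMatching {a' : A} :
    s(Sum.inl a, Sum.inl a') ∈ extMatching P2 M ↔ s(a, a') ∈ M := by
  simp [extMatching, copyPair, exists_map_inl_eq_iff]

lemma inl_inr_mem_extMatching :
    s(Sum.inl a, Sum.inr b) ∈ extMatching P2 M ↔ a = b.1 ∧ ¬ Matched M a := by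
  simp only [extMatching, copyPair, Finset.mem_union, Finset.mem_image,
    exists_map_inl_eq_iff]
  aesop

lemma inr_inr_not_mem_extMatching {b' : {a : A // a ∈ A2set P2}} :
    s(Sum.inr b, Sum.inr b') ∉ extMatching P2 M := by
  simp [extMatching, copyPair, exists_map_inl_eq_iff]

lemma extM5_eq_extMatching (M1 : Finset (Sym2 A)) : extM5 P2 M1 = extMatching P2 M1 := by
  ext p
  simp only [extM5, extMatching, A1set]
  aesop

lemma inl_mem_extMatching :
    s(Sum.inl a, y) ∈ extMatching P2 M ↔
      (∃ a', y = Sum.inl a' ∧ s(a, a') ∈ M) ∨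
        (∃ b, y = Sum.inr b ∧ a = b.1 ∧ ¬ Matched M a) := by
  cases y <;> simp [inl_inl_mem_extMatching, inl_inr_mem_extMatching]

lemma inr_mem_extMatching :
    s(Sum.inr b, y) ∈ extMatching P2 M ↔ y = Sum.inl b.1 ∧ ¬ Matched M b.1 := by
  cases y with
  | inl a =>
    simp only [pair_mem_comm, inl_inr_mem_extMatching, Sum.inl.injEq]
    constructor <;> rintro ⟨rfl, h⟩ <;> exact ⟨rfl, h⟩
  | inr b' => simp [inr_inr_not_mem_extMatching]

lemma isMatching_extMatching (hM : IsMatching M) : IsMatching (extMatching P2 M) := by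
  refine ⟨fun p hp => ?_, fun x y z hy hz => ?_⟩
  · induction p using Sym2.ind with
    | _ x y =>
      rw [Sym2.mk_isDiag_iff]
      rintro rfl
      cases x with
      | inl a => exact hM.1 _ (inl_inl_mem_extMatching.mp hp) (Sym2.mk_isDiag_iff.mpr rfl)
      | inr b => exact inr_inr_not_mem_extMatching hp
  · cases x with
    | inl a =>
      rcases inl_mem_extMatching.mp hy with ⟨a₁, rfl, h₁⟩ | ⟨b₁, rfl, rfl, h₁⟩ <;>
        rcases inl_mem_extMatching.mp hz with ⟨a₂, rfl, h₂⟩ | ⟨b₂, rfl, h₁₂, h₂⟩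
      · rw [hM.2 a a₁ a₂ h₁ h₂]
      · exact (h₂ ⟨a₁, h₁⟩).elim
      · exact (h₁ ⟨a₂, h₂⟩).elim
      · rw [Subtype.ext h₁₂]
    | inr b => rw [(inr_mem_extMatching.mp hy).1, (inr_mem_extMatching.mp hz).1]

lemma acceptable_extMatching (hM : Acceptable P M) :
    Acceptable (extProfile5 P2 P) (extMatching P2 M) := by
  intro x y h
  cases x with
  | inl a =>
    rcases inl_mem_extMatching.mp h with ⟨a', rfl, ha'⟩ | ⟨b, rfl, rfl, -⟩
    · exact inl_mem_acc_extProfile5.mpr (hM a a' ha')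
    · exact inr_mem_acc_extProfile5.mpr rfl
  | inr b => exact mem_acc_extProfile5_inr.mpr (inr_mem_extMatching.mp h).1

lemma not_blocks_extMatching_inl (hM : IsStable P M) :
    ¬ Blocks (extProfile5 P2 P) (extMatching P2 M) (Sum.inl a) y := by
  rintro ⟨hya, hay, hpa, hpy⟩
  cases y with
  | inl a' =>
    exact hM.2.2 a a' ⟨inl_mem_acc_extProfile5.mp hya, inl_mem_acc_extProfile5.mp hay,
      fun c hc => hpa _ (inl_inl_mem_extMatching.mpr hc),
      fun c hc => hpy _ (inl_inl_mem_extMatching.mpr hc)⟩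
  | inr b =>
    obtain rfl := inr_mem_acc_extProfile5.mp hya
    by_cases ha : Matched M b.1
    · obtain ⟨c, hc⟩ := ha
      exact not_prefers_extProfile5_inr (inl_mem_acc_extProfile5.mpr (hM.2.1 _ _ hc))
        (hpa _ (inl_inl_mem_extMatching.mpr hc))
    · exact lt_irrefl _ (hpa _ (inl_inr_mem_extMatching.mpr ⟨rfl, ha⟩))

lemma isStable_extMatching (hM : IsStable P M) :
    IsStable (extProfile5 P2 P) (extMatching P2 M) := by
  refine ⟨isMatching_extMatching hM.1, acceptable_extMatching hM.2.1, fun x y h => ?_⟩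
  cases x with
  | inl a => exact not_blocks_extMatching_inl hM h
  | inr b =>
    obtain rfl := mem_acc_extProfile5_inr.mp h.1
    exact not_blocks_extMatching_inl hM (blocks_comm.mp h)

lemma isPerfect_extMatching (hs : P2.Strict) (hM : IsStable P2 M) :
    IsPerfect (extMatching P2 M) := by
  intro x
  cases x with
  | inl a =>
    by_cases ha : a ∈ A2set P2
    · exact ⟨Sum.inr ⟨a, ha⟩,
        inl_inr_mem_extMatching.mpr ⟨rfl, not_matched_of_mem_A2set ha hM⟩⟩
    · obtain ⟨a', h⟩ := matched_of_not_mem_A2set hs ha hM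
      exact ⟨Sum.inl a', inl_inl_mem_extMatching.mpr h⟩
  | inr b =>
    exact ⟨Sum.inl b.1, inr_mem_extMatching.mpr ⟨rfl, not_matched_of_mem_A2set b.2 hM⟩⟩

variable {M' : Finset (Sym2 (A ⊕ {a : A // a ∈ A2set P2}))}

lemma isStable_restrictMatching (hM' : IsStable (extProfile5 P2 P) M') :
    IsStable P (restrictMatching M') := by
  refine ⟨⟨fun p hp => ?_, fun a b c hb hc => ?_⟩, fun a b h => ?_, ?_⟩
  · rw [← Sym2.isDiag_map Sum.inl_injective]
    exact hM'.1.1 _ (Finset.mem_preimage.mp hp)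
  · exact Sum.inl.inj (hM'.1.2 _ _ _ (mem_restrictMatching.mp hb) (mem_restrictMatching.mp hc))
  · exact inl_mem_acc_extProfile5.mp (hM'.2.1 _ _ (mem_restrictMatching.mp h))
  · rintro a b ⟨hba, hab, hpa, hpb⟩
    refine hM'.2.2 (Sum.inl a) (Sum.inl b) ⟨inl_mem_acc_extProfile5.mpr hba,
      inl_mem_acc_extProfile5.mpr hab, fun c hc => ?_, fun c hc => ?_⟩
    · cases c with
      | inl c => exact hpa c (mem_restrictMatching.mpr hc)
      | inr c => exact prefers_extProfile5_inl_inr hba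
    · cases c with
      | inl c => exact hpb c (mem_restrictMatching.mpr hc)
      | inr c => exact prefers_extProfile5_inl_inr hab

/-- An agent of `A2` is unmatched among the old agents, so it must be matched to its copy:
otherwise the two would block. -/
lemma copyPair_mem_of_isStable (hM' : IsStable (extProfile5 P2 P2) M')
    (b : {a : A // a ∈ A2set P2}) : copyPair b ∈ M' := by
  by_contra hb
  have hun : ¬ Matched (restrictMatching M') b.1 :=
    not_matched_of_mem_A2set b.2 (isStable_restrictMatching hM')
  refine hM'.2.2 (Sum.inl b.1) (Sum.inr b) ⟨inr_mem_acc_extProfile5.mpr rfl,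
    mem_acc_extProfile5_inr.mpr rfl, fun c hc => ?_, fun c hc => ?_⟩
  · cases c with
    | inl c => exact (hun ⟨c, mem_restrictMatching.mpr hc⟩).elim
    | inr c =>
      obtain rfl : b = c := Subtype.ext (inr_mem_acc_extProfile5.mp (hM'.2.1 _ _ hc))
      exact (hb hc).elim
  · obtain rfl := mem_acc_extProfile5_inr.mp (hM'.2.1 _ _ hc)
    exact (hb (pair_mem_comm.mp hc)).elim

lemma eq_extMatching_restrictMatching (hM' : IsStable (extProfile5 P2 P2) M') :
    M' = extMatching P2 (restrictMatching M') := by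
  have inl_inr_mem : ∀ (a : A) (b : {a : A // a ∈ A2set P2}), s(Sum.inl a, Sum.inr b) ∈ M' ↔
      s(Sum.inl a, Sum.inr b) ∈ extMatching P2 (restrictMatching M') := by
    intro a b
    rw [inl_inr_mem_extMatching]
    constructor
    · intro h
      obtain rfl := inr_mem_acc_extProfile5.mp (hM'.2.1 _ _ h)
      exact ⟨rfl, not_matched_of_mem_A2set b.2 (isStable_restrictMatching hM')⟩
    · rintro ⟨rfl, -⟩
      exact copyPair_mem_of_isStable hM' b
  ext p
  induction p using Sym2.ind with
  | _ x y =>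
    cases x with
    | inl a =>
      cases y with
      | inl a' => rw [inl_inl_mem_extMatching, mem_restrictMatching]
      | inr b => exact inl_inr_mem a b
    | inr b =>
      cases y with
      | inl a => rw [Sym2.eq_swap]; exact inl_inr_mem a b
      | inr b' =>
        refine iff_of_false (fun h => ?_) inr_inr_not_mem_extMatching
        simpa using mem_acc_extProfile5_inr.mp (hM'.2.1 _ _ h)

lemma symmDiff_extMatching (M1 : Finset (Sym2 A)) (hM2 : IsStable P2 M2) :
    symmDiff (extMatching P2 M1) (extMatching P2 M2) =
      (symmDiff M1 M2).image (Sym2.map Sum.inl) ∪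
        ((A2set P2).attach.filter fun b => Matched M1 b.1).image copyPair := by
  ext p
  induction p using Sym2.ind with
  | _ x y =>
    rcases x with a | b <;> rcases y with a' | b'
    · simp [Finset.mem_symmDiff, inl_inl_mem_extMatching, exists_map_inl_eq_iff, copyPair]
    · have := not_matched_of_mem_A2set b'.2 hM2
      simp only [Finset.mem_symmDiff, inl_inr_mem_extMatching, Finset.mem_union,
        Finset.mem_image, exists_map_inl_eq_iff, copyPair]
      aesop
    · have := not_matched_of_mem_A2set b.2 hM2
      rw [Sym2.eq_swap]
      simp only [Finset.mem_symmDiff, inl_inr_mem_extMatching, Finset.mem_union,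
        Finset.mem_image, exists_map_inl_eq_iff, copyPair]
      aesop
    · simp [Finset.mem_symmDiff, inr_inr_not_mem_extMatching, exists_map_inl_eq_iff, copyPair]

lemma card_symmDiff_extMatching (M1 : Finset (Sym2 A)) (hM2 : IsStable P2 M2) :
    (symmDiff (extMatching P2 M1) (extMatching P2 M2)).card =
      (symmDiff M1 M2).card + (A2set P2 \ A1set M1).card := by
  have hdisj : Disjoint ((symmDiff M1 M2).image (Sym2.map Sum.inl))
      (((A2set P2).attach.filter fun b => Matched M1 b.1).image copyPair) := by
    simp [Finset.disjoint_left, Sym2.forall, copyPair]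
  rw [symmDiff_extMatching M1 hM2, Finset.card_union_of_disjoint hdisj,
    Finset.card_image_of_injective _ (Sym2.map.injective Sum.inl_injective),
    Finset.card_image_of_injective _ copyPair_injective, Finset.filter_attach (Matched M1),
    Finset.card_map, Finset.card_attach, Finset.sdiff_eq_filter]
  simp [A1set]

theorem stmt5_general (P1 P2 : PrefProfile A) (hs2 : P2.Strict)
    (M1 : Finset (Sym2 A)) (hM1 : IsStable P1 M1) (k : ℕ)
    (hex : ∃ M : Finset (Sym2 A), IsStable P2 M) :
    IsStable (extProfile5 P2 P1) (extM5 P2 M1) ∧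
    (∃ M, IsStable (extProfile5 P2 P2) M ∧ IsPerfect M) ∧
    ((∃ M2, IsStable P2 M2 ∧ (symmDiff M1 M2).card ≤ k) ↔
     (∃ M2', IsStable (extProfile5 P2 P2) M2' ∧
        (symmDiff (extM5 P2 M1) M2').card ≤ k + (A2set P2 \ A1set M1).card)) := by
  rw [extM5_eq_extMatching]
  refine ⟨isStable_extMatching hM1, ?_, ⟨?_, ?_⟩⟩
  · obtain ⟨M, hM⟩ := hex
    exact ⟨extMatching P2 M, isStable_extMatching hM, isPerfect_extMatching hs2 hM⟩
  · rintro ⟨M2, hM2, hk⟩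
    refine ⟨extMatching P2 M2, isStable_extMatching hM2, ?_⟩
    rw [card_symmDiff_extMatching M1 hM2]
    omega
  · rintro ⟨M2', hM2', hk⟩
    have hM2 := isStable_restrictMatching hM2'
    refine ⟨restrictMatching M2', hM2, ?_⟩
    rw [eq_extMatching_restrictMatching hM2', card_symmDiff_extMatching M1 hM2] at hk
    omega

/-- Reducing an ISR instance to one where the second profile admits a perfect stable
matching: (a) `M1'` is stable in `P1'`; (b) `P2'` admits a perfect stable matching;
(c) there is a stable matching for `P2` within symmetric difference `k` of `M1` iff
there is a stable matching for `P2'` within symmetric difference `k + |A2 ∖ A1|` of `M1'`. -/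
theorem stmt5 (P1 P2 : PrefProfile A)
    (hl1 : P1.Lawful) (hl2 : P2.Lawful) (hs1 : P1.Strict) (hs2 : P2.Strict)
    (M1 : Finset (Sym2 A)) (hM1 : IsStable P1 M1) (k : ℕ)
    (hex : ∃ M : Finset (Sym2 A), IsStable P2 M) :
    IsStable (extProfile5 P2 P1) (extM5 P2 M1) ∧
    (∃ M, IsStable (extProfile5 P2 P2) M ∧ IsPerfect M) ∧
    ((∃ M2, IsStable P2 M2 ∧ (symmDiff M1 M2).card ≤ k) ↔
     (∃ M2', IsStable (extProfile5 P2 P2) M2' ∧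
        (symmDiff (extM5 P2 M1) M2').card ≤ k + (A2set P2 \ A1set M1).card)) :=
  stmt5_general P1 P2 hs2 M1 hM1 k hex
end
end
end
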